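/- arXiv:1204.1687 — 5 statements merged into one kernel-verified Lean document; each statement's English description precedes it below -/
import Mathlib

section
/- For N ≥ 1, let v_1, …, v_N be distinct points in ℝ². The multivariable Vandermonde matrix V_N of size N × N(N+1)/2, whose rows are indexed by i ∈ {1, …, N} and whose columns are indexed by the multi-indices α = (α_1, α_2) ∈ ℤ_{≥0}² with α_1 + α_2 ≤ N − 1, with (i, α) entry equal to v_i^α = (v_i)_1^{α_1} (v_i)_2^{α_2}, has rank exactly N. -/
/-!
The matrix has `N` rows, so its rank is at most `N`; for the reverse inequality it has a right
inverse. For each `j`, the product over `k ≠ j` of an affine form vanishing at `v k` but not at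
`v j` is a polynomial of total degree at most `N - 1` that vanishes at `v i` exactly when `i ≠ j`.
Its coefficient vector, divided by its value at `v j`, is column `j` of a right inverse, because
multiplying the Vandermonde matrix by a coefficient vector evaluates the polynomial at the points.
-/

open Finset Matrix

noncomputable section

/-- Multi-indices `α = (α₁, α₂)` with `|α| = α₁ + α₂ ≤ d`. -/
abbrev Idx (d : ℕ) : Type := {ij : ℕ × ℕ // ij.1 + ij.2 ≤ d}

instance (d : ℕ) : Fintype (Idx d) :=
  Fintype.subtype
    ((Finset.range (d + 1) ×ˢ Finset.range (d + 1)).filter fun ij => ij.1 + ij.2 ≤ d)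
    (by
      rintro ⟨a, b⟩
      simp only [Finset.mem_filter, Finset.mem_product, Finset.mem_range]
      omega)

open MvPolynomial

theorem Matrix.rank_eq_card_height_of_mul_eq_one {m n K : Type*} [Fintype m] [Fintype n]
    [DecidableEq m] [Field K] {M : Matrix m n K} {B : Matrix n m K} (h : M * B = 1) :
    M.rank = Fintype.card m :=
  le_antisymm M.rank_le_card_height <| by
    simpa only [h, rank_one] using M.rank_mul_le_left B

namespace Idx

def toFinsupp {d : ℕ} (α : Idx d) : Fin 2 →₀ ℕ :=
  Finsupp.equivFunOnFinite.symm ![α.1.1, α.1.2]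

@[simp] lemma toFinsupp_apply_zero {d : ℕ} (α : Idx d) : α.toFinsupp 0 = α.1.1 := rfl

@[simp] lemma toFinsupp_apply_one {d : ℕ} (α : Idx d) : α.toFinsupp 1 = α.1.2 := rfl

lemma toFinsupp_injective (d : ℕ) : Function.Injective (toFinsupp (d := d)) :=
  fun α β h => Subtype.ext <| Prod.ext (by simpa using congr($h 0)) (by simpa using congr($h 1))

lemma mem_range_toFinsupp {d : ℕ} {s : Fin 2 →₀ ℕ} (hs : s.degree ≤ d) :
    s ∈ Set.range (toFinsupp (d := d)) := by
  rw [Finsupp.degree_eq_sum, Fin.sum_univ_two] at hs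
  exact ⟨⟨(s 0, s 1), hs⟩, Finsupp.ext fun i => by fin_cases i <;> rfl⟩

end Idx

variable {K : Type*} [Field K]

lemma sum_coeff_mul_pow_eq_eval {d : ℕ} {p : MvPolynomial (Fin 2) K} (hp : p.totalDegree ≤ d)
    (x : K × K) :
    ∑ α : Idx d, x.1 ^ α.1.1 * x.2 ^ α.1.2 * coeff α.toFinsupp p = eval ![x.1, x.2] p := by
  have hsupp : p.support ⊆ univ.image Idx.toFinsupp := fun s hs => by
    obtain ⟨α, rfl⟩ := Idx.mem_range_toFinsupp ((le_totalDegree hs).trans hp)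
    exact mem_image_of_mem _ (mem_univ α)
  rw [eval_eq', sum_subset hsupp fun s _ hs => by rw [notMem_support_iff.1 hs, zero_mul],
    sum_image fun α _ β _ h => Idx.toFinsupp_injective d h]
  refine sum_congr rfl fun α _ => ?_
  simp [Fin.prod_univ_two, mul_comm]

open Classical in
def separatingForm (a b : K × K) : MvPolynomial (Fin 2) K :=
  if a.1 = b.1 then X 1 - C b.2 else X 0 - C b.1

lemma totalDegree_separatingForm_le (a b : K × K) : (separatingForm a b).totalDegree ≤ 1 := by
  unfold separatingForm
  split_ifs <;> exact (totalDegree_sub_C_le _ _).trans (totalDegree_X _).le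

lemma eval_separatingForm_right (a b : K × K) : eval ![b.1, b.2] (separatingForm a b) = 0 := by
  unfold separatingForm
  split_ifs <;> simp

lemma eval_separatingForm_left_ne_zero {a b : K × K} (hab : a ≠ b) :
    eval ![a.1, a.2] (separatingForm a b) ≠ 0 := by
  unfold separatingForm
  split_ifs with h
  · simpa [sub_eq_zero] using fun h2 => hab (Prod.ext h h2)
  · simpa [sub_eq_zero] using h

variable {ι : Type*} [Fintype ι] [DecidableEq ι]

def lagrangeBasis (v : ι → K × K) (j : ι) : MvPolynomial (Fin 2) K :=
  ∏ k ∈ univ.erase j, separatingForm (v j) (v k)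

lemma totalDegree_lagrangeBasis_le (v : ι → K × K) (j : ι) :
    (lagrangeBasis v j).totalDegree ≤ Fintype.card ι - 1 :=
  calc (lagrangeBasis v j).totalDegree
      ≤ ∑ k ∈ univ.erase j, (separatingForm (v j) (v k)).totalDegree := totalDegree_finsetProd _ _
    _ ≤ ∑ k ∈ univ.erase j, 1 := sum_le_sum fun k _ => totalDegree_separatingForm_le _ _
    _ = Fintype.card ι - 1 := by simp [card_erase_of_mem]

lemma eval_lagrangeBasis_of_ne (v : ι → K × K) {i j : ι} (hij : i ≠ j) :
    eval ![(v i).1, (v i).2] (lagrangeBasis v j) = 0 := by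
  rw [lagrangeBasis, map_prod]
  exact prod_eq_zero (mem_erase.2 ⟨hij, mem_univ i⟩) (eval_separatingForm_right _ _)

lemma eval_lagrangeBasis_self_ne_zero {v : ι → K × K} (hv : Function.Injective v) (j : ι) :
    eval ![(v j).1, (v j).2] (lagrangeBasis v j) ≠ 0 := by
  rw [lagrangeBasis, map_prod]
  exact prod_ne_zero_iff.2 fun k hk =>
    eval_separatingForm_left_ne_zero (hv.ne (mem_erase.1 hk).1.symm)

theorem rank_bivariateVandermonde {d : ℕ} {v : ι → K × K} (hv : Function.Injective v)
    (hd : Fintype.card ι ≤ d + 1) :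
    (Matrix.of fun i (α : Idx d) => (v i).1 ^ α.1.1 * (v i).2 ^ α.1.2).rank = Fintype.card ι := by
  let B : Matrix (Idx d) ι K := Matrix.of fun α j =>
    coeff α.toFinsupp (lagrangeBasis v j) / eval ![(v j).1, (v j).2] (lagrangeBasis v j)
  refine Matrix.rank_eq_card_height_of_mul_eq_one (B := B) ?_
  ext i j
  have hdeg := (totalDegree_lagrangeBasis_le v j).trans (Nat.sub_le_of_le_add hd)
  rw [mul_apply]
  simp only [of_apply, B, ← mul_div_assoc, ← sum_div, sum_coeff_mul_pow_eq_eval hdeg]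
  rcases eq_or_ne i j with rfl | hij
  · rw [div_self (eval_lagrangeBasis_self_ne_zero hv i), one_apply_eq]
  · rw [eval_lagrangeBasis_of_ne v hij, zero_div, one_apply_ne hij]

theorem statement9_general (N : ℕ) (v : Fin N → ℝ × ℝ)
    (hv : Function.Injective v) :
    (Matrix.of fun (i : Fin N) (α : Idx (N - 1)) =>
      (v i).1 ^ α.1.1 * (v i).2 ^ α.1.2).rank = N := by
  simpa only [Fintype.card_fin] using
    rank_bivariateVandermonde hv (d := N - 1) (by rw [Fintype.card_fin]; omega)

/-- For `N ≥ 1` distinct points `v_1, …, v_N` in `ℝ²`, the multivariable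
Vandermonde matrix `V_N = (v_i^α)` (rows indexed by `i`, columns by multi-indices `α`
with `|α| ≤ N - 1`, of which there are `N(N+1)/2`) has rank exactly `N`. -/
theorem statement9 (N : ℕ) (hN : 1 ≤ N) (v : Fin N → ℝ × ℝ)
    (hv : Function.Injective v) :
    (Matrix.of fun (i : Fin N) (α : Idx (N - 1)) =>
      (v i).1 ^ α.1.1 * (v i).2 ^ α.1.2).rank = N :=
  statement9_general N v hv

end
end

section
/- Let d ≥ 1, let x_1, …, x_d be distinct reals and y_1, …, y_d be distinct reals, and set P(x,y) = ∏_{i=1}^d (x − x_i) and Q(x,y) = ∏_{j=1}^d (y − y_j). If f ∈ ℝ[x,y] has total degree ρ ≥ d and f vanishes at every point of the grid {(x_i, y_j) : 1 ≤ i, j ≤ d} (the real variety of the ideal generated by P and Q), then there exist u, v ∈ ℝ[x,y] with deg u ≤ ρ − d and deg v ≤ ρ − d such that f = uP + vQ. -/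
/-!
Alon's Combinatorial Nullstellensatz, applied to the grid `x(Fin d) × y(Fin d)`, writes
`f = u P + v Q` with `deg (u P), deg (v Q) ≤ deg f`. Since `ℝ[x,y]` is a domain and
`deg P = deg Q = d`, the total degree is additive on these products, so `deg u, deg v ≤ deg f - d`.
-/

open MvPolynomial Finset

namespace MvPolynomial

variable {R σ : Type*} [CommRing R]

theorem totalDegree_prod_X_sub_C [Nontrivial R] (i : σ) (s : Finset R) :
    (∏ r ∈ s, (X i - C r)).totalDegree = #s := by
  cases exists_wellFoundedGT σ
  rw [← degree_degLexDegree, MonomialOrder.degree_prod_of_regular fun r _ => by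
    simp only [(MonomialOrder.degLex.monic_X_sub_C i r).leadingCoeff_eq_one, isRegular_one]]
  simp [MonomialOrder.degree_X_sub_C]

theorem exists_sum_mul_prod_X_sub_C_of_eval_eq_zero [Fintype σ] [IsDomain R]
    (S : σ → Finset R) (hS : ∀ i, (S i).Nonempty) (f : MvPolynomial σ R)
    (hf : ∀ x : σ → R, (∀ i, x i ∈ S i) → eval x f = 0) :
    ∃ h : σ → MvPolynomial σ R, (∀ i, (h i).totalDegree ≤ f.totalDegree - #(S i)) ∧
      f = ∑ i, h i * ∏ r ∈ S i, (X i - C r) := by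
  obtain ⟨h, hdeg, rfl⟩ := combinatorial_nullstellensatz_exists_linearCombination S hS f hf
  refine ⟨h, fun i => ?_, ?_⟩
  · rcases eq_or_ne (h i) 0 with hi | hi
    · simp [hi]
    have hdegP := totalDegree_prod_X_sub_C i (S i)
    have hP : ∏ r ∈ S i, (X i - C r) ≠ 0 := fun h0 => by
      simp [h0, eq_comm, (hS i).ne_empty] at hdegP
    have := hdeg i
    rw [totalDegree_mul_of_isDomain hP hi, hdegP] at this
    omega
  · rw [Finsupp.linearCombination_apply, Finsupp.sum_fintype _ _ (by simp)]
    simp [mul_comm]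

end MvPolynomial

theorem statement12_general (d : ℕ) (hd : 1 ≤ d) (x y : Fin d → ℝ)
    (hx : Function.Injective x) (hy : Function.Injective y)
    (P Q : MvPolynomial (Fin 2) ℝ)
    (hP : P = ∏ i : Fin d, (MvPolynomial.X 0 - MvPolynomial.C (x i)))
    (hQ : Q = ∏ j : Fin d, (MvPolynomial.X 1 - MvPolynomial.C (y j)))
    (f : MvPolynomial (Fin 2) ℝ)
    (hvan : ∀ (i j : Fin d),
      MvPolynomial.eval (fun t : Fin 2 => if t = 0 then x i else y j) f = 0) :
    ∃ u v : MvPolynomial (Fin 2) ℝ,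
      u.totalDegree ≤ f.totalDegree - d ∧ v.totalDegree ≤ f.totalDegree - d ∧
      f = u * P + v * Q := by
  let S : Fin 2 → Finset ℝ := ![univ.image x, univ.image y]
  have hS : ∀ t, (S t).Nonempty := by
    have : Nonempty (Fin d) := ⟨⟨0, hd⟩⟩
    intro t
    fin_cases t <;> simp [S, univ_nonempty]
  have hgrid : ∀ p : Fin 2 → ℝ, (∀ t, p t ∈ S t) → eval p f = 0 := by
    intro p hp
    obtain ⟨i, -, hi⟩ := mem_image.mp (hp 0)
    obtain ⟨j, -, hj⟩ := mem_image.mp (hp 1)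
    have hpij : p = fun t => if t = 0 then x i else y j := by
      funext t
      fin_cases t <;> simp [hi, hj]
    rw [hpij]
    exact hvan i j
  obtain ⟨h, hdeg, hf⟩ := exists_sum_mul_prod_X_sub_C_of_eval_eq_zero S hS f hgrid
  refine ⟨h 0, h 1, ?_, ?_, ?_⟩
  · simpa [S, card_image_of_injective _ hx] using hdeg 0
  · simpa [S, card_image_of_injective _ hy] using hdeg 1
  · rw [hf, Fin.sum_univ_two, hP, hQ]
    simp [S, prod_image hx.injOn, prod_image hy.injOn]

/-- Let `P(x,y) = ∏ (x - x_i)` and `Q(x,y) = ∏ (y - y_j)` for distinct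
reals `x_1, …, x_d` and distinct reals `y_1, …, y_d`. If `f ∈ ℝ[x,y]` has total degree
`ρ ≥ d` and vanishes on the grid `{(x_i, y_j)}` (the real variety of the ideal `(P,Q)`),
then `f = uP + vQ` with `deg u, deg v ≤ ρ - d`. -/
theorem statement12 (d : ℕ) (hd : 1 ≤ d) (x y : Fin d → ℝ)
    (hx : Function.Injective x) (hy : Function.Injective y)
    (P Q : MvPolynomial (Fin 2) ℝ)
    (hP : P = ∏ i : Fin d, (MvPolynomial.X 0 - MvPolynomial.C (x i)))
    (hQ : Q = ∏ j : Fin d, (MvPolynomial.X 1 - MvPolynomial.C (y j)))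
    (f : MvPolynomial (Fin 2) ℝ) (hρ : d ≤ f.totalDegree)
    (hvan : ∀ (i j : Fin d),
      MvPolynomial.eval (fun t : Fin 2 => if t = 0 then x i else y j) f = 0) :
    ∃ u v : MvPolynomial (Fin 2) ℝ,
      u.totalDegree ≤ f.totalDegree - d ∧ v.totalDegree ≤ f.totalDegree - d ∧
      f = u * P + v * Q :=
  statement12_general d hd x y hx hy P Q hP hQ f hvan
end

section
/- Let d ≥ 1, let β = (β_{ij})_{i+j ≤ 2d} be a real multisequence, let 1 ≤ n ≤ d and p(x,y) = Σ_{r+s ≤ n−1} a_{rs} x^r y^s, and suppose the column relations X^{n+i'}Y^{j'} = (x^{i'} y^{j'} p)(X,Y) hold in M_d(β) for all i', j' ≥ 0 with n + i' + j' ≤ d. Then for all f with 0 ≤ f ≤ d + 1 − n and all i, j ≥ 0 with i + j ≤ d − 1: β_{n+f+i, d+1−n−f+j} = Σ_{r+s ≤ n−1} a_{rs} β_{r+f+i, s+d+1−n−f+j}. (That is, the entries of the recursively defined extension columns X^{n+f}Y^{d+1−n−f} := (x^f y^{d+1−n−f} p)(X,Y), in rows of degree ≤ d−1, coincide with the moments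 inherited from β.) -/
open Finset Matrix

noncomputable section

/-- Monomial indices of degree exactly `e`. -/
abbrev Jdx (e : ℕ) : Type := {ij : ℕ × ℕ // ij.1 + ij.2 = e}

instance (e : ℕ) : Fintype (Jdx e) :=
  Fintype.subtype
    ((Finset.range (e + 1) ×ˢ Finset.range (e + 1)).filter fun ij => ij.1 + ij.2 = e)
    (by
      rintro ⟨a, b⟩
      simp only [Finset.mem_filter, Finset.mem_product, Finset.mem_range]
      omega)

/-- The moment matrix `M_d(β)`: rows and columns are indexed by monomials of degree ≤ d,
with entry in row `(i,j)`, column `(k,l)` equal to `β (i+k) (j+l)`. -/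
def momentMatrix (d : ℕ) (β : ℕ → ℕ → ℝ) : Matrix (Idx d) (Idx d) ℝ :=
  Matrix.of fun r c => β (r.1.1 + c.1.1) (r.1.2 + c.1.2)

/-- The coefficient vector (truncated to degree ≤ d) of the polynomial with
coefficient function `a`. -/
def coeffVec (d : ℕ) (a : ℕ → ℕ → ℝ) : Idx d → ℝ := fun c => a c.1.1 c.1.2

/-- `p(X,Y)`: the linear combination of the columns of `M_d(β)` given by the
coefficient function `a` of `p`. -/
def polyCol (d : ℕ) (β : ℕ → ℕ → ℝ) (a : ℕ → ℕ → ℝ) : Idx d → ℝ :=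
  momentMatrix d β *ᵥ coeffVec d a

/-- Coefficient function of the monomial `x^u y^v`. -/
def monoC (u v : ℕ) : ℕ → ℕ → ℝ := fun k l => if k = u ∧ l = v then 1 else 0

/-- Coefficient function of `x^u y^v * p`, where `p` has coefficient function `a`. -/
def shiftC (u v : ℕ) (a : ℕ → ℕ → ℝ) : ℕ → ℕ → ℝ :=
  fun k l => if u ≤ k ∧ v ≤ l then a (k - u) (l - v) else 0

/-- The polynomial with coefficient function `a` has (total) degree at most `D`. -/
def DegLE (a : ℕ → ℕ → ℝ) (D : ℕ) : Prop := ∀ k l : ℕ, D < k + l → a k l = 0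

/-- Coefficient function of the product of two polynomials. -/
def cMul (a b : ℕ → ℕ → ℝ) : ℕ → ℕ → ℝ := fun k l =>
  ∑ i ∈ Finset.range (k + 1), ∑ j ∈ Finset.range (l + 1), a i j * b (k - i) (l - j)

/-- `M_d(β)` is recursively generated: whenever `p, q, pq` all have degree ≤ d and
`p(X,Y) = 0`, also `(pq)(X,Y) = 0`. -/
def RecursivelyGenerated (d : ℕ) (β : ℕ → ℕ → ℝ) : Prop :=
  ∀ a b : ℕ → ℕ → ℝ, DegLE a d → DegLE b d → DegLE (cMul a b) d →
    polyCol d β a = 0 → polyCol d β (cMul a b) = 0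

/-
The entry `β_{n+f+i, d+1-n-f+j}` has total degree `d+1+i+j ≤ 2d`, so it is the entry of `M_d(β)` in
some row `x^u y^v` and column `X^{n+i'}Y^{j'}` with `u + v ≤ d` and `n + i' + j' ≤ d`. In that row,
the given column relation for `(i', j')` is exactly the claimed identity.
-/

lemma polyCol_shiftC_apply {d D : ℕ} (i' j' : ℕ) (hD : D + i' + j' ≤ d) (β : ℕ → ℕ → ℝ)
    {a : ℕ → ℕ → ℝ} (ha : DegLE a D) (r : Idx d) :
    polyCol d β (shiftC i' j' a) r =
      ∑ c : Idx D, a c.1.1 c.1.2 * β (r.1.1 + (c.1.1 + i')) (r.1.2 + (c.1.2 + j')) := by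
  refine (Fintype.sum_of_injective
    (fun c : Idx D => (⟨(c.1.1 + i', c.1.2 + j'), by omega⟩ : Idx d)) ?_ _ _ ?_ ?_).symm
  · intro c c' h
    simp only [Subtype.mk.injEq, Prod.mk.injEq] at h
    exact Subtype.ext (Prod.ext (by omega) (by omega))
  · rintro ⟨⟨k, l⟩, hkl⟩ hnot
    simp only [momentMatrix, coeffVec, shiftC, of_apply]
    split_ifs with hkl'
    · refine mul_eq_zero_of_right _ (ha _ _ ?_)
      by_contra! hle
      exact hnot ⟨⟨(k - i', l - j'), hle⟩,
        Subtype.ext (Prod.ext (by dsimp only; omega) (by dsimp only; omega))⟩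
    · exact mul_zero _
  · intro c
    simp only [momentMatrix, coeffVec, shiftC, of_apply, le_add_iff_nonneg_left, zero_le,
      and_self, if_true, Nat.add_sub_cancel]
    exact mul_comm _ _

lemma degLE_monoC (u v : ℕ) : DegLE (monoC u v) (u + v) := by
  intro k l h
  simp only [monoC, ite_eq_right_iff, one_ne_zero, imp_false]
  omega

lemma polyCol_shiftC_monoC_apply {d : ℕ} (n i' j' : ℕ) (h : n + i' + j' ≤ d)
    (β : ℕ → ℕ → ℝ) (r : Idx d) :
    polyCol d β (shiftC i' j' (monoC n 0)) r = β (r.1.1 + (n + i')) (r.1.2 + j') := by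
  rw [polyCol_shiftC_apply i' j' h β (degLE_monoC n 0),
    Fintype.sum_eq_single ⟨(n, 0), le_refl _⟩]
  · simp [monoC]
  · rintro ⟨⟨k, l⟩, _⟩ hne
    simp only [monoC, ite_mul, one_mul, zero_mul, ite_eq_right_iff, and_imp]
    rintro rfl rfl
    exact (hne rfl).elim

lemma shiftC_sub (u v : ℕ) (a b : ℕ → ℕ → ℝ) :
    shiftC u v (a - b) = shiftC u v a - shiftC u v b := by
  ext k l
  simp only [shiftC, Pi.sub_apply]
  split_ifs <;> ring

lemma polyCol_sub (d : ℕ) (β a b : ℕ → ℕ → ℝ) :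
    polyCol d β (a - b) = polyCol d β a - polyCol d β b :=
  mulVec_sub _ _ _

lemma moment_eq_of_column_relation {d n : ℕ} {β a : ℕ → ℕ → ℝ} (ha : DegLE a (n - 1))
    {i' j' : ℕ} (h : n + i' + j' ≤ d)
    (hrel : polyCol d β (shiftC i' j' (monoC n 0 - a)) = 0) {u v : ℕ} (huv : u + v ≤ d) :
    β (n + (u + i')) (v + j') =
      ∑ c : Idx (n - 1), a c.1.1 c.1.2 * β (c.1.1 + (u + i')) (c.1.2 + (v + j')) := by
  have hrow := congrFun hrel ⟨(u, v), huv⟩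
  rw [shiftC_sub, polyCol_sub, Pi.sub_apply, Pi.zero_apply, sub_eq_zero,
    polyCol_shiftC_monoC_apply n i' j' h, polyCol_shiftC_apply i' j' (by omega) β ha] at hrow
  dsimp only at hrow
  rw [add_left_comm, hrow]
  refine sum_congr rfl fun c _ => ?_
  rw [add_left_comm c.1.1, add_left_comm c.1.2]

lemma exists_degree_split {d n x y : ℕ} (hnd : n ≤ d) (hxy : n + x + y ≤ 2 * d) :
    ∃ i' j' u v : ℕ, n + i' + j' ≤ d ∧ u + v ≤ d ∧ u + i' = x ∧ v + j' = y := by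
  rcases le_total x (x + y - d) with hx | hx
  · exact ⟨x, y - d, 0, y - (y - d), by omega, by omega, by omega, by omega⟩
  · exact ⟨x + y - d, 0, x - (x + y - d), y, by omega, by omega, by omega, by omega⟩

theorem statement13_general (d n : ℕ) (hd : 1 ≤ d) (hnd : n ≤ d)
    (β a : ℕ → ℕ → ℝ) (ha : DegLE a (n - 1))
    (hX : ∀ i' j' : ℕ, n + i' + j' ≤ d →
      polyCol d β (shiftC i' j' (monoC n 0 - a)) = 0) :
    ∀ f : ℕ, f ≤ d + 1 - n → ∀ i j : ℕ, i + j ≤ d - 1 →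
      β (n + f + i) (d + 1 - n - f + j) =
        ∑ c : Idx (n - 1),
          a c.1.1 c.1.2 * β (c.1.1 + f + i) (c.1.2 + (d + 1 - n - f) + j) := by
  intro f hf i j hij
  obtain ⟨i', j', u, v, hcol, hrow, hx, hy⟩ :=
    exists_degree_split (x := f + i) (y := d + 1 - n - f + j) hnd (by omega)
  have hentry := moment_eq_of_column_relation ha hcol (hX i' j' hcol) hrow
  rw [hx, hy] at hentry
  simpa only [add_assoc] using hentry

/-- If the column relations `X^{n+i'}Y^{j'} = (x^{i'} y^{j'} p)(X,Y)`
hold in `M_d(β)` for all `n + i' + j' ≤ d`, where `p = Σ_{r+s ≤ n-1} a_{rs} x^r y^s`,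
then the entries of the recursively defined extension columns
`X^{n+f}Y^{d+1-n-f} := (x^f y^{d+1-n-f} p)(X,Y)`, in rows of degree ≤ d-1, coincide with
the moments inherited from `β`. -/
theorem statement13 (d n : ℕ) (hd : 1 ≤ d) (hn1 : 1 ≤ n) (hnd : n ≤ d)
    (β a : ℕ → ℕ → ℝ) (ha : DegLE a (n - 1))
    (hX : ∀ i' j' : ℕ, n + i' + j' ≤ d →
      polyCol d β (shiftC i' j' (monoC n 0 - a)) = 0) :
    ∀ f : ℕ, f ≤ d + 1 - n → ∀ i j : ℕ, i + j ≤ d - 1 →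
      β (n + f + i) (d + 1 - n - f + j) =
        ∑ c : Idx (n - 1),
          a c.1.1 c.1.2 * β (c.1.1 + f + i) (c.1.2 + (d + 1 - n - f) + j) :=
  statement13_general d n hd hnd β a ha hX
end
end

section
/- Let d ≥ 1, let β = (β_{ij})_{i+j ≤ 2d} be a real multisequence such that M_d(β) is positive semidefinite and recursively generated, let 1 ≤ n, m ≤ d, p(x,y) = Σ_{r+s ≤ n−1} a_{rs} x^r y^s, and q(x,y) = Σ_{u+v ≤ m, v < m} b_{uv} x^u y^v, and suppose the column relations X^{n+i'}Y^{j'} = (x^{i'} y^{j'} p)(X,Y) hold for all i', j' ≥ 0 with n + i' + j' ≤ d and the column relations X^{k'}Y^{m+l'} = (x^{k'} y^{l'} q)(X,Y) hold for all k', l' ≥ 0 with m + k' + l' ≤ d. Then for all k with 0 ≤ k ≤ d + 1 − m and all i, j ≥ 0 with i + j ≤ d − 1: β_{d+1−m−k+i, m+k+j} = Σ_{u+v ≤ m, v < m} b_{uv} β_{u+d+1−m−k+i, v+k+j}. (That is, the entries of the recursively defined extension columns X^{d+1−m−k}Y^{m+k} := (x^{d+1−m−k} y^k q)(X,Y), in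 rows of degree ≤ d−1, coincide with the moments inherited from β.) -/
open Finset Matrix

noncomputable section

/-!
The moment `β_{x, y+m}` in question has total degree `x + y + m = d + 1 + i + j ≤ 2d`, so its
exponent splits as a row `(r, s)` of degree `≤ d` plus a column shift `(k', l')` with
`m + k' + l' ≤ d`. Row `(r, s)` of the column relation `(x^{k'} y^{l'} (y^m - q))(X,Y) = 0` is then
exactly the claimed identity.
-/

lemma polyCol_apply_mk (d : ℕ) (β a : ℕ → ℕ → ℝ) {r s : ℕ} (hrs : r + s ≤ d) :
    polyCol d β a ⟨(r, s), hrs⟩ = ∑ c : Idx d, β (r + c.1.1) (s + c.1.2) * a c.1.1 c.1.2 :=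
  rfl

lemma DegLE.sub {a b : ℕ → ℕ → ℝ} {D : ℕ} (ha : DegLE a D) (hb : DegLE b D) :
    DegLE (a - b) D := fun k l h => by simp [ha k l h, hb k l h]

lemma sum_Idx_mul_shiftC {a : ℕ → ℕ → ℝ} {e d u v : ℕ} (ha : DegLE a e) (h : e + u + v ≤ d)
    (F : ℕ → ℕ → ℝ) :
    ∑ c : Idx d, F c.1.1 c.1.2 * shiftC u v a c.1.1 c.1.2 =
      ∑ c : Idx e, F (u + c.1.1) (v + c.1.2) * a c.1.1 c.1.2 := by
  symm
  refine Fintype.sum_of_injective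
    (fun c : Idx e => (⟨(u + c.1.1, v + c.1.2), by have := c.2; omega⟩ : Idx d))
    (fun c c' hcc => by
      obtain ⟨⟨_, _⟩, _⟩ := c
      obtain ⟨⟨_, _⟩, _⟩ := c'
      simp only [Subtype.mk.injEq, Prod.mk.injEq] at hcc ⊢
      omega) _ _ ?_ ?_
  · rintro ⟨⟨x, y⟩, hxy⟩ hx
    simp only [shiftC]
    split_ifs with hle
    · refine mul_eq_zero_of_right _ (ha _ _ (not_le.mp fun he => hx ⟨⟨(x - u, y - v), he⟩, ?_⟩))
      ext <;> simp only <;> omega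
    · exact mul_zero _
  · intro c
    simp [shiftC]

lemma moment_eq_of_shiftC_relation {d m : ℕ} {β q : ℕ → ℕ → ℝ} (hq : DegLE q m)
    {k' l' : ℕ} (h : m + k' + l' ≤ d)
    (hrel : polyCol d β (shiftC k' l' (monoC 0 m - q)) = 0) {r s : ℕ} (hrs : r + s ≤ d) :
    β (r + k') (s + l' + m) =
      ∑ c : Idx m, q c.1.1 c.1.2 * β (r + k' + c.1.1) (s + l' + c.1.2) := by
  have hrow := congrFun hrel ⟨(r, s), hrs⟩
  rw [Pi.zero_apply, polyCol_apply_mk,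
    sum_Idx_mul_shiftC ((by simpa using degLE_monoC 0 m : DegLE (monoC 0 m) m).sub hq)
      (by omega) fun x y => β (r + x) (s + y)] at hrow
  have hmono : ∑ c : Idx m, β (r + (k' + c.1.1)) (s + (l' + c.1.2)) * monoC 0 m c.1.1 c.1.2 =
      β (r + k') (s + l' + m) := by
    rw [Fintype.sum_eq_single ⟨(0, m), by simp⟩]
    · simp [monoC, add_assoc]
    · rintro ⟨⟨x, y⟩, _⟩ hc
      simp only [monoC]
      rw [if_neg fun h => hc (by simp [h.1, h.2]), mul_zero]
  simp only [Pi.sub_apply, mul_sub, Finset.sum_sub_distrib, hmono] at hrow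
  rw [sub_eq_zero.mp hrow]
  exact Finset.sum_congr rfl fun c _ => by rw [mul_comm, add_assoc, add_assoc]

lemma exists_add_split {x y A B : ℕ} (h : x + y ≤ A + B) :
    ∃ r k' s l' : ℕ, r + k' = x ∧ s + l' = y ∧ r + s ≤ A ∧ k' + l' ≤ B :=
  ⟨x - min x B, min x B, y - min y (B - min x B), min y (B - min x B),
    by omega, by omega, by omega, by omega⟩

lemma moment_eq_of_Y_relations {d m : ℕ} {β q : ℕ → ℕ → ℝ} (hmd : m ≤ d) (hq : DegLE q m)
    (hY : ∀ k' l' : ℕ, m + k' + l' ≤ d →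
      polyCol d β (shiftC k' l' (monoC 0 m - q)) = 0)
    {x y : ℕ} (hxy : x + y + m ≤ 2 * d) :
    β x (y + m) = ∑ c : Idx m, q c.1.1 c.1.2 * β (x + c.1.1) (y + c.1.2) := by
  obtain ⟨r, k', s, l', rfl, rfl, hrs, hkl⟩ :=
    exists_add_split (x := x) (y := y) (A := d) (B := d - m) (by omega)
  exact moment_eq_of_shiftC_relation hq (by omega) (hY k' l' (by omega)) hrs

theorem statement14_general (d m : ℕ) (hd : 1 ≤ d)
    (hmd : m ≤ d)
    (β q : ℕ → ℕ → ℝ)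
    (hq : DegLE q m)
    (hY : ∀ k' l' : ℕ, m + k' + l' ≤ d →
      polyCol d β (shiftC k' l' (monoC 0 m - q)) = 0) :
    ∀ k : ℕ, k ≤ d + 1 - m → ∀ i j : ℕ, i + j ≤ d - 1 →
      β (d + 1 - m - k + i) (m + k + j) =
        ∑ c : Idx m,
          q c.1.1 c.1.2 * β (c.1.1 + (d + 1 - m - k) + i) (c.1.2 + k + j) := by
  intro k hk i j hij
  rw [show m + k + j = k + j + m by omega,
    moment_eq_of_Y_relations hmd hq hY (x := d + 1 - m - k + i) (by omega)]
  exact Finset.sum_congr rfl fun c _ => by congr 2 <;> omega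

/-- Suppose `M_d(β)` is positive semidefinite and recursively
generated, with recursive column relations coming from `X^n = p(X,Y)` and
`Y^m = q(X,Y)`, where `q = Σ_{u+v ≤ m, v < m} b_{uv} x^u y^v`. Then the entries of the
recursively defined extension columns `X^{d+1-m-k}Y^{m+k} := (x^{d+1-m-k} y^k q)(X,Y)`,
in rows of degree ≤ d-1, coincide with the moments inherited from `β`. -/
theorem statement14 (d n m : ℕ) (hd : 1 ≤ d)
    (hn1 : 1 ≤ n) (hnd : n ≤ d) (hm1 : 1 ≤ m) (hmd : m ≤ d)
    (β p q : ℕ → ℕ → ℝ)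
    (hpsd : (momentMatrix d β).PosSemidef)
    (hrg : RecursivelyGenerated d β)
    (hp : DegLE p (n - 1)) (hq : DegLE q m) (hqm : q 0 m = 0)
    (hX : ∀ i' j' : ℕ, n + i' + j' ≤ d →
      polyCol d β (shiftC i' j' (monoC n 0 - p)) = 0)
    (hY : ∀ k' l' : ℕ, m + k' + l' ≤ d →
      polyCol d β (shiftC k' l' (monoC 0 m - q)) = 0) :
    ∀ k : ℕ, k ≤ d + 1 - m → ∀ i j : ℕ, i + j ≤ d - 1 →
      β (d + 1 - m - k + i) (m + k + j) =
        ∑ c : Idx m,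
          q c.1.1 c.1.2 * β (c.1.1 + (d + 1 - m - k) + i) (c.1.2 + k + j) :=
  statement14_general d m hd hmd β q hq hY
end
end

section
/- Let d ≥ 1, let β' = (β'_{ij})_{i+j ≤ 2d+2} be a real multisequence, let M_{d+1} = M_{d+1}(β'), let M_d be the compression of M_{d+1} to rows and columns indexed by monomials of degree ≤ d, and let B(d+1) be the block of M_{d+1} with rows of degree ≤ d and columns of degree d+1. If the column space of B(d+1) is contained in the column space of M_d, then for every polynomial p ∈ ℝ[x,y] of degree ≤ d with p(X,Y) = 0 in the columns of M_d, the relation p(X,Y) = 0 also holds in the (full) columns of M_{d+1}. -/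
/-!
Rows of `M_{d+1}` of degree `≤ d` restricted to the columns of degree `≤ d` are rows of `M_d`,
and since `deg p ≤ d` only those columns enter `p(X,Y)`. A row of degree `d + 1`, restricted
the same way, is a column of `B(d+1)`, hence of the form `M_d v`; by symmetry of `M_d` its
product with the coefficients of `p` is `v · (M_d p) = 0`.
-/

open Finset Matrix

noncomputable section

theorem Matrix.IsSymm.mulVec_dotProduct_eq_zero {n R : Type*} [Fintype n] [CommSemiring R]
    {A : Matrix n n R} (hA : A.IsSymm) (v : n → R) {w : n → R} (hw : A *ᵥ w = 0) :
    (A *ᵥ v) ⬝ᵥ w = 0 := by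
  rw [dotProduct_comm, dotProduct_mulVec, ← mulVec_transpose, hA.eq, hw, zero_dotProduct]

theorem momentMatrix_isSymm (d : ℕ) (β : ℕ → ℕ → ℝ) : (momentMatrix d β).IsSymm :=
  IsSymm.ext fun r c => by simp only [momentMatrix, of_apply, add_comm]

def Idx.castSucc {d : ℕ} (c : Idx d) : Idx (d + 1) := ⟨c.1, by omega⟩

theorem sum_idx_succ_of_eq_zero {M : Type*} [AddCommMonoid M] (d : ℕ) (f : ℕ × ℕ → M)
    (hf : ∀ ij : ℕ × ℕ, ij.1 + ij.2 = d + 1 → f ij = 0) :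
    ∑ c : Idx (d + 1), f c.1 = ∑ c : Idx d, f c.1 := by
  refine (Fintype.sum_of_injective Idx.castSucc ?_ _ _ ?_ fun _ => rfl).symm
  · exact fun c c' h => Subtype.ext (congrArg (fun x : Idx (d + 1) => x.1) h)
  · intro c hc
    exact hf c.1 (le_antisymm c.2 (not_le.mp fun hle => hc ⟨⟨c.1, hle⟩, rfl⟩))

theorem polyCol_succ_apply_of_degLE {d : ℕ} {a : ℕ → ℕ → ℝ} (ha : DegLE a d)
    (β : ℕ → ℕ → ℝ) (r : Idx (d + 1)) :
    polyCol (d + 1) β a r =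
      (fun c : Idx d => β (c.1.1 + r.1.1) (c.1.2 + r.1.2)) ⬝ᵥ coeffVec d a := by
  simp only [polyCol, mulVec, dotProduct, momentMatrix, coeffVec, of_apply]
  rw [sum_idx_succ_of_eq_zero d (fun ij => β (r.1.1 + ij.1) (r.1.2 + ij.2) * a ij.1 ij.2)
    fun ij hij => by rw [ha ij.1 ij.2 (by omega), mul_zero]]
  simp only [add_comm]

theorem statement17_general (d : ℕ) (β' : ℕ → ℕ → ℝ)
    (hran : ∀ c : Jdx (d + 1), ∃ v : Idx d → ℝ,
      (fun r : Idx d => β' (r.1.1 + c.1.1) (r.1.2 + c.1.2)) = momentMatrix d β' *ᵥ v) :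
    ∀ a : ℕ → ℕ → ℝ, DegLE a d →
      polyCol d β' a = 0 → polyCol (d + 1) β' a = 0 := by
  intro a ha hrel
  funext r
  rw [polyCol_succ_apply_of_degLE ha]
  rcases le_or_gt (r.1.1 + r.1.2) d with hle | hlt
  · refine Eq.trans ?_ (congrFun hrel ⟨r.1, hle⟩)
    simp only [polyCol, mulVec, momentMatrix, of_apply, add_comm]
  · obtain ⟨v, hv⟩ := hran ⟨r.1, by omega⟩
    exact hv ▸ (momentMatrix_isSymm d β').mulVec_dotProduct_eq_zero v hrel

/-- If the column space of the block `B(d+1)` of `M_{d+1}(β')` is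
contained in the column space of its compression `M_d`, then every column relation
`p(X,Y) = 0` of `M_d` (with `deg p ≤ d`) also holds in the full columns of
`M_{d+1}(β')`. -/
theorem statement17 (d : ℕ) (hd : 1 ≤ d) (β' : ℕ → ℕ → ℝ)
    (hran : ∀ c : Jdx (d + 1), ∃ v : Idx d → ℝ,
      (fun r : Idx d => β' (r.1.1 + c.1.1) (r.1.2 + c.1.2)) = momentMatrix d β' *ᵥ v) :
    ∀ a : ℕ → ℕ → ℝ, DegLE a d →
      polyCol d β' a = 0 → polyCol (d + 1) β' a = 0 :=
  statement17_general d β' hran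
end
end
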